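/- Let θ ∈ (0,1), μ ∈ (θ,1], c, C > 0, and λ_k = c·k for k ∈ ℕ. Then for every α > 0, the sum ∑_{k=1}^∞ (k^{−μ}/(c k + α))·k^θ is bounded above by C'·α^{θ−μ} where C' = C·∫₀^∞ τ^{θ−μ}/(cτ+1) dτ < ∞. -/

import Mathlib

/-!
Since `-1 < θ - μ < 0`, the term `k ^ (θ - μ) / (c k + α)` is a decreasing function of `k` whose
integral over `(0, ∞)` converges, so the series is at most that integral. The substitution
`t = α τ` turns the integral into `α ^ (θ - μ) ∫₀^∞ τ ^ (θ - μ) / (c τ + 1) dτ`, and one may take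
`C = 1`.
-/

open MeasureTheory Set

theorem AntitoneOn.tsum_succ_le_integral_Ioi {f : ℝ → ℝ} (hf : AntitoneOn f (Ioi 0))
    (hf0 : ∀ x ∈ Ioi 0, 0 ≤ f x) (hfi : IntegrableOn f (Ioi 0)) :
    ∑' n : ℕ, f (n + 1) ≤ ∫ x in Ioi 0, f x := by
  have hfi' : ∀ {a b : ℝ}, 0 ≤ a → a ≤ b → IntervalIntegrable f volume a b := fun ha hab =>
    (intervalIntegrable_iff_integrableOn_Ioc_of_le hab).2 <|
      hfi.mono_set fun x hx => ha.trans_lt hx.1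
  refine Real.tsum_le_of_sum_range_le (fun n => hf0 _ (mem_Ioi.2 (by positivity))) fun n => ?_
  calc ∑ i ∈ Finset.range n, f (i + 1)
      ≤ ∑ i ∈ Finset.range n, ∫ x in (i : ℝ)..(i + 1 : ℕ), f x := by
        gcongr with i
        calc f (i + 1) = ∫ _ in (i : ℝ)..(i + 1 : ℕ), f (i + 1) := by simp
          _ ≤ ∫ x in (i : ℝ)..(i + 1 : ℕ), f x := by
            refine intervalIntegral.integral_mono_on_of_le_Ioo (by simp) intervalIntegrable_const
              (hfi' (by positivity) (by simp)) fun x hx => ?_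
            push_cast at hx
            exact hf ((Nat.cast_nonneg i).trans_lt hx.1) (mem_Ioi.2 (by positivity)) hx.2.le
    _ = ∫ x in (0 : ℝ)..n, f x := by
        simpa using intervalIntegral.sum_integral_adjacent_intervals (a := fun i : ℕ => (i : ℝ))
          fun k _ => hfi' (by positivity) (by simp)
    _ ≤ ∫ x in Ioi 0, f x := by
        rw [intervalIntegral.integral_of_le (by positivity)]
        exact setIntegral_mono_set hfi (ae_restrict_of_forall_mem measurableSet_Ioi hf0)
          Ioc_subset_Ioi_self.eventuallyLE

theorem antitoneOn_rpow_div_mul_add {p c a : ℝ} (hp : p ≤ 0) (hc : 0 ≤ c) (ha : 0 < a) :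
    AntitoneOn (fun t : ℝ => t ^ p / (c * t + a)) (Ioi 0) := fun x hx y _ hxy =>
  div_le_div₀ (Real.rpow_nonneg (le_of_lt hx) p) (Real.rpow_le_rpow_of_nonpos hx hxy hp)
    (by positivity [mem_Ioi.1 hx]) (by gcongr)

/-- Up to the factor `a`, this is Mathlib's integrand `Real.rpowIntegrand₀₁ (p + 1) t (a / c)`. -/
theorem integrableOn_rpow_div_mul_add_Ioi {p c a : ℝ} (hp1 : -1 < p) (hp0 : p < 0) (hc : 0 < c)
    (ha : 0 < a) : IntegrableOn (fun t : ℝ => t ^ p / (c * t + a)) (Ioi 0) := by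
  have hp : p + 1 ∈ Ioo (0 : ℝ) 1 := ⟨by linarith, by linarith⟩
  refine IntegrableOn.congr_fun
    ((Real.integrableOn_rpowIntegrand₀₁_Ioi hp (x := a / c) (by positivity)).const_mul a⁻¹)
    (fun t ht => ?_) measurableSet_Ioi
  rw [Real.rpowIntegrand₀₁_eq_pow_div hp (le_of_lt ht) (by positivity), add_sub_cancel_right]
  have : (0 : ℝ) < t := ht
  field_simp

theorem integral_rpow_div_mul_add_Ioi (p c : ℝ) {a : ℝ} (ha : 0 < a) :
    ∫ t in Ioi 0, t ^ p / (c * t + a) = a ^ p * ∫ τ in Ioi 0, τ ^ p / (c * τ + 1) := by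
  have h := integral_comp_mul_left_Ioi (fun t : ℝ => t ^ p / (c * t + a)) 0 ha
  have hscale : EqOn (fun τ : ℝ => (a * τ) ^ p / (c * (a * τ) + a))
      (fun τ => a ^ p / a * (τ ^ p / (c * τ + 1))) (Ioi 0) := fun τ hτ => by
    have : (0 : ℝ) < τ := hτ
    dsimp only
    rw [Real.mul_rpow ha.le this.le, show c * (a * τ) + a = a * (c * τ + 1) by ring]
    field_simp
  rw [setIntegral_congr_fun measurableSet_Ioi hscale, integral_const_mul, mul_zero,
    smul_eq_mul] at h
  field_simp at h
  linarith

/-- Decay of the series ∑ k^{-μ} k^θ / (ck+α) like α^{θ-μ}, via comparison with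
the finite integral ∫₀^∞ τ^{θ-μ}/(cτ+1) dτ. -/
theorem series_decay_alpha (θ mu c : ℝ) (hθ : θ ∈ Set.Ioo (0:ℝ) 1)
    (hmu : mu ∈ Set.Ioc θ 1) (hc : 0 < c) :
    IntegrableOn (fun τ : ℝ => τ ^ (θ - mu) / (c * τ + 1)) (Set.Ioi 0) ∧
    ∃ C > (0:ℝ), ∀ α > (0:ℝ),
      ∑' k : ℕ+, ((k : ℝ) ^ (-mu) / (c * k + α)) * (k : ℝ) ^ θ ≤
        (C * ∫ τ in Set.Ioi (0:ℝ), τ ^ (θ - mu) / (c * τ + 1)) * α ^ (θ - mu) := by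
  have hp1 : -1 < θ - mu := by linarith [hθ.1, hmu.2]
  have hp0 : θ - mu < 0 := by linarith [hmu.1]
  refine ⟨integrableOn_rpow_div_mul_add_Ioi hp1 hp0 hc one_pos, 1, one_pos, fun α hα => ?_⟩
  calc ∑' k : ℕ+, ((k : ℝ) ^ (-mu) / (c * k + α)) * (k : ℝ) ^ θ
      = ∑' n : ℕ, ((n + 1 : ℝ) ^ (θ - mu) / (c * (n + 1) + α)) := by
        rw [tsum_pnat_eq_tsum_succ (f := fun k : ℕ => ((k : ℝ) ^ (-mu) / (c * k + α)) * k ^ θ)]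
        congr 1 with n
        push_cast
        rw [div_mul_eq_mul_div, ← Real.rpow_add (by positivity), neg_add_eq_sub]
    _ ≤ ∫ t in Ioi 0, t ^ (θ - mu) / (c * t + α) :=
        (antitoneOn_rpow_div_mul_add hp0.le hc.le hα).tsum_succ_le_integral_Ioi
          (fun t ht => by positivity [mem_Ioi.1 ht])
          (integrableOn_rpow_div_mul_add_Ioi hp1 hp0 hc hα)
    _ = (1 * ∫ τ in Ioi 0, τ ^ (θ - mu) / (c * τ + 1)) * α ^ (θ - mu) := by
        rw [integral_rpow_div_mul_add_Ioi _ _ hα, one_mul, mul_comm]
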